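/- The function h(x) = x e^x E₁(x) is strictly increasing on (0, ∞), with h(x) → 0 as x → 0⁺ and h(x) → 1 as x → ∞. -/

import Mathlib

/-!
By the fundamental theorem of calculus, `E1' x = -exp (-x) / x`. Comparing derivatives with
`exp (-x) / (1 + x)`, whose derivative `-exp (-x) (2 + x) / (1 + x)²` is larger, and using that
both sides vanish at `∞`, gives `exp (-x) / (1 + x) < E1 x`. This is exactly the positivity of
`h' x = (1 + x) eˣ E1 x - 1` for `h x = x eˣ E1 x`. The limits follow by squeezing: at `∞` between
`x / (1 + x)` and `1` (from `E1 x ≤ exp (-x) / x`), at `0⁺` between `0` and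
`x eˣ (E1 1 - log x)` (from `exp (-t) / t ≤ 1 / t`).
-/

open Real MeasureTheory Filter Set Topology

noncomputable def E1 (a : ℝ) : ℝ := ∫ t in Set.Ioi a, Real.exp (-t) / t

lemma StrictAntiOn.lt_of_tendsto_atTop {α β : Type*} [LinearOrder α] [NoMaxOrder α]
    [Preorder β] [TopologicalSpace β] [OrderClosedTopology β] {f : α → β} {a x : α} {l : β}
    (hf : StrictAntiOn f (Ioi a)) (hl : Tendsto f atTop (𝓝 l)) (hx : a < x) : l < f x := by
  have : Nonempty α := ⟨a⟩
  obtain ⟨y, hxy⟩ := exists_gt x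
  have hy : a < y := hx.trans hxy
  have hly : l ≤ f y := le_of_tendsto hl <| eventually_gt_atTop y |>.mono fun z hyz ↦
    (hf hy (hy.trans hyz) hyz).le
  exact hly.trans_lt (hf hx hy hxy)

lemma continuousOn_exp_neg_div : ContinuousOn (fun t : ℝ ↦ exp (-t) / t) (Ioi 0) :=
  (continuous_exp.comp continuous_neg).continuousOn.div continuousOn_id fun _ ht ↦ ht.ne'

lemma exp_neg_div_le_exp_neg_div {a t : ℝ} (ha : 0 < a) (hat : a ≤ t) :
    exp (-t) / t ≤ exp (-t) / a :=
  div_le_div_of_nonneg_left (exp_pos _).le ha hat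

lemma integrableOn_exp_neg_div_Ioi {a : ℝ} (ha : 0 < a) :
    IntegrableOn (fun t : ℝ ↦ exp (-t) / t) (Ioi a) := by
  refine ((integrableOn_exp_neg_Ioi a).div_const a).mono' ?_ ?_
  · exact (continuousOn_exp_neg_div.mono (Ioi_subset_Ioi ha.le)).aestronglyMeasurable
      measurableSet_Ioi
  · filter_upwards [ae_restrict_mem measurableSet_Ioi] with t (ht : a < t)
    rw [norm_of_nonneg (div_nonneg (exp_pos _).le (ha.trans ht).le)]
    exact exp_neg_div_le_exp_neg_div ha ht.le

lemma E1_nonneg {x : ℝ} (hx : 0 < x) : 0 ≤ E1 x :=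
  setIntegral_nonneg measurableSet_Ioi fun t (ht : x < t) ↦
    div_nonneg (exp_pos _).le (hx.trans ht).le

lemma E1_le_exp_neg_div {x : ℝ} (hx : 0 < x) : E1 x ≤ exp (-x) / x :=
  calc E1 x ≤ ∫ t in Ioi x, exp (-t) / x :=
        setIntegral_mono_on (integrableOn_exp_neg_div_Ioi hx)
          ((integrableOn_exp_neg_Ioi x).div_const x)
          measurableSet_Ioi fun t ht ↦ exp_neg_div_le_exp_neg_div hx (le_of_lt ht)
    _ = exp (-x) / x := by rw [integral_div, integral_exp_neg_Ioi]

lemma E1_sub_E1 {a b : ℝ} (ha : 0 < a) (hb : 0 < b) :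
    E1 a - E1 b = ∫ t in a..b, exp (-t) / t :=
  intervalIntegral.integral_Ioi_sub_Ioi' (integrableOn_exp_neg_div_Ioi ha)
    (integrableOn_exp_neg_div_Ioi hb)

lemma hasDerivAt_E1 {x : ℝ} (hx : 0 < x) : HasDerivAt E1 (-(exp (-x) / x)) x := by
  have hint : HasDerivAt (fun u ↦ ∫ t in (1 : ℝ)..u, exp (-t) / t) (exp (-x) / x) x :=
    intervalIntegral.integral_hasDerivAt_right
      ((continuousOn_exp_neg_div.mono fun t ht ↦ lt_of_lt_of_le (lt_min one_pos hx)
        ht.1).intervalIntegrable)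
      (continuousOn_exp_neg_div.stronglyMeasurableAtFilter isOpen_Ioi x hx)
      (continuousOn_exp_neg_div.continuousAt (Ioi_mem_nhds hx))
  refine (hint.const_sub (E1 1)).congr_of_eventuallyEq ?_
  filter_upwards [Ioi_mem_nhds hx] with u (hu : 0 < u)
  rw [← E1_sub_E1 one_pos hu, sub_sub_cancel]

lemma tendsto_E1_atTop : Tendsto E1 atTop (𝓝 0) := by
  have hbound : Tendsto (fun x : ℝ ↦ exp (-x) / x) atTop (𝓝 0) := by
    simpa only [div_eq_mul_inv, zero_mul] using
      tendsto_exp_neg_atTop_nhds_zero.mul tendsto_inv_atTop_zero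
  refine tendsto_of_tendsto_of_tendsto_of_le_of_le' tendsto_const_nhds hbound ?_ ?_
  · filter_upwards [eventually_gt_atTop 0] with x hx using E1_nonneg hx
  · filter_upwards [eventually_gt_atTop 0] with x hx using E1_le_exp_neg_div hx

lemma hasDerivAt_E1_sub_exp_neg_div_one_add {x : ℝ} (hx : 0 < x) :
    HasDerivAt (fun y ↦ E1 y - exp (-y) / (1 + y)) (-(exp (-x) / (x * (1 + x) ^ 2))) x := by
  have hexp : HasDerivAt (fun y ↦ exp (-y)) (-exp (-x)) x := by
    simpa using (hasDerivAt_neg x).exp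
  refine ((hasDerivAt_E1 hx).sub (hexp.div ((hasDerivAt_id' x).const_add 1) (by positivity)))
    |>.congr_deriv ?_
  field_simp
  ring

lemma exp_neg_div_one_add_lt_E1 {x : ℝ} (hx : 0 < x) : exp (-x) / (1 + x) < E1 x := by
  have hanti : StrictAntiOn (fun y ↦ E1 y - exp (-y) / (1 + y)) (Ioi 0) :=
    strictAntiOn_of_hasDerivWithinAt_neg (convex_Ioi 0)
      (fun y hy ↦ (hasDerivAt_E1_sub_exp_neg_div_one_add hy).continuousAt.continuousWithinAt)
      (by simpa using fun y hy ↦ (hasDerivAt_E1_sub_exp_neg_div_one_add hy).hasDerivWithinAt)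
      (by simpa using fun y (hy : 0 < y) ↦ by positivity)
  have hlim : Tendsto (fun y ↦ E1 y - exp (-y) / (1 + y)) atTop (𝓝 0) := by
    have hinv : Tendsto (fun y : ℝ ↦ (1 + y)⁻¹) atTop (𝓝 0) :=
      tendsto_inv_atTop_zero.comp (tendsto_atTop_add_const_left _ 1 tendsto_id)
    simpa only [div_eq_mul_inv, zero_mul, sub_zero] using
      tendsto_E1_atTop.sub (tendsto_exp_neg_atTop_nhds_zero.mul hinv)
  exact sub_pos.mp (hanti.lt_of_tendsto_atTop hlim hx)

lemma E1_le_E1_one_sub_log {x : ℝ} (hx : 0 < x) (hx1 : x ≤ 1) : E1 x ≤ E1 1 - log x := by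
  have hpos : Icc x 1 ⊆ Ioi 0 := fun t ht ↦ hx.trans_le ht.1
  have hle : ∫ t in x..1, exp (-t) / t ≤ ∫ t in x..1, t⁻¹ :=
    intervalIntegral.integral_mono_on hx1
      ((continuousOn_exp_neg_div.mono hpos).intervalIntegrable_of_Icc hx1)
      ((continuousOn_inv₀.mono fun t ht ↦ (hpos ht).ne').intervalIntegrable_of_Icc hx1)
      fun t ht ↦ by
        rw [← one_div]
        exact div_le_div_of_nonneg_right (exp_le_one_iff.mpr (neg_nonpos.mpr (hpos ht).le))
          (hpos ht).le
  rw [integral_inv_of_pos hx one_pos, one_div, log_inv, ← E1_sub_E1 hx one_pos] at hle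
  linarith

lemma hasDerivAt_mul_exp_mul_E1 {x : ℝ} (hx : 0 < x) :
    HasDerivAt (fun y ↦ y * exp y * E1 y) ((1 + x) * exp x * E1 x - 1) x := by
  refine (((hasDerivAt_id' x).mul (hasDerivAt_exp x)).mul (hasDerivAt_E1 hx)).congr_deriv ?_
  simp only [Pi.mul_apply, exp_neg]
  field_simp
  ring

lemma one_lt_one_add_mul_exp_mul_E1 {x : ℝ} (hx : 0 < x) : 1 < (1 + x) * exp x * E1 x := by
  have h := mul_lt_mul_of_pos_left (exp_neg_div_one_add_lt_E1 hx)
    (by positivity : 0 < (1 + x) * exp x)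
  rwa [mul_div_assoc', mul_assoc, ← exp_add, add_neg_cancel, exp_zero, mul_one,
    div_self (by positivity)] at h

lemma strictMonoOn_mul_exp_mul_E1 : StrictMonoOn (fun x ↦ x * exp x * E1 x) (Ioi 0) :=
  strictMonoOn_of_hasDerivWithinAt_pos (convex_Ioi 0)
    (fun _ hx ↦ (hasDerivAt_mul_exp_mul_E1 hx).continuousAt.continuousWithinAt)
    (by simpa using fun _ hx ↦ (hasDerivAt_mul_exp_mul_E1 hx).hasDerivWithinAt)
    (by simpa using fun _ hx ↦ one_lt_one_add_mul_exp_mul_E1 hx)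

lemma tendsto_mul_exp_mul_E1_nhdsGT_zero :
    Tendsto (fun x ↦ x * exp x * E1 x) (𝓝[>] 0) (𝓝 0) := by
  have hbound : Tendsto (fun x ↦ exp x * (x * E1 1 - x * log x)) (𝓝[>] 0) (𝓝 0) := by
    have hcont : Continuous fun x ↦ exp x * (x * E1 1 - x * log x) := by fun_prop
    simpa using (hcont.tendsto 0).mono_left nhdsWithin_le_nhds
  refine tendsto_of_tendsto_of_tendsto_of_le_of_le' tendsto_const_nhds hbound ?_ ?_
  · filter_upwards [self_mem_nhdsWithin] with x (hx : 0 < x)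
    have := E1_nonneg hx
    positivity
  · filter_upwards [Ioc_mem_nhdsGT one_pos] with x ⟨hx, hx1⟩
    calc x * exp x * E1 x ≤ x * exp x * (E1 1 - log x) := by
          gcongr
          exact E1_le_E1_one_sub_log hx hx1
      _ = exp x * (x * E1 1 - x * log x) := by ring

lemma tendsto_mul_exp_mul_E1_atTop : Tendsto (fun x ↦ x * exp x * E1 x) atTop (𝓝 1) := by
  have hlower : Tendsto (fun x : ℝ ↦ x / (1 + x)) atTop (𝓝 1) := by
    have h := (tendsto_inv_atTop_zero (𝕜 := ℝ)).const_add 1 |>.inv₀ (by norm_num)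
    rw [add_zero, inv_one] at h
    refine h.congr' ?_
    filter_upwards [eventually_gt_atTop 0] with x hx
    field_simp
    ring
  refine tendsto_of_tendsto_of_tendsto_of_le_of_le' hlower tendsto_const_nhds ?_ ?_
  · filter_upwards [eventually_gt_atTop 0] with x hx
    calc x / (1 + x) = x * exp x * (exp (-x) / (1 + x)) := by
          rw [exp_neg]; field_simp
      _ ≤ x * exp x * E1 x := by gcongr; exact (exp_neg_div_one_add_lt_E1 hx).le
  · filter_upwards [eventually_gt_atTop 0] with x hx
    calc x * exp x * E1 x ≤ x * exp x * (exp (-x) / x) := by gcongr; exact E1_le_exp_neg_div hx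
      _ = 1 := by rw [exp_neg]; field_simp

theorem xexpE1_mono_limits :
    StrictMonoOn (fun x : ℝ => x * Real.exp x * E1 x) (Set.Ioi 0) ∧
    Tendsto (fun x : ℝ => x * Real.exp x * E1 x) (nhdsWithin 0 (Set.Ioi 0)) (nhds 0) ∧
    Tendsto (fun x : ℝ => x * Real.exp x * E1 x) atTop (nhds 1) :=
  ⟨strictMonoOn_mul_exp_mul_E1, tendsto_mul_exp_mul_E1_nhdsGT_zero,
    tendsto_mul_exp_mul_E1_atTop⟩
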